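/- Let d > 1 be real, λ₁ = 2d − 1 − 2√(d(d−1)), 0 < λ < λ₁, Δ = λ² − 2λ(2d−1) + 1 > 0, α = (1 − λ − √Δ)/2, β = (1 − λ + √Δ)/2, and γ̄ = β/α. Let 1 < u < γ̄ and L > 0. Suppose f : [0,∞) → [0,∞) is measurable with sup_{t ≥ 0} f(t) e^{−uαt} < ∞ and satisfies, for all t ≥ 0, f(t) ≤ L e^{uαt} + λ d e^{−λt} ∫₀ᵗ e^{(λ+1)v} (∫_v^∞ f(s) e^{−s} ds) dv. Then for all t ≥ 0, f(t) ≤ [L (uα + λ)(1 − uα) / ((1 − λ)uα − λ(d−1) − u²α²)] · e^{uαt}. -/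

import Mathlib

/-!
Write γ = uα and let M = sup_{t ≥ 0} f(t) e^{-γt}. Inserting f(s) ≤ M e^{γs} into the tail
integral gives ∫_v^∞ f(s) e^{-s} ds ≤ M e^{-(1-γ)v} / (1-γ), and then the hypothesis yields
f(t) ≤ (L + qM) e^{γt} with q = λd / ((1-γ)(λ+γ)). Hence M ≤ L + qM. By Vieta,
(1-γ)(λ+γ) - λd = (γ-α)(β-γ), which is positive for α < γ < β < 1, so q < 1 and
M ≤ L / (1-q), the stated constant.
-/

open MeasureTheory Set Real

theorem subcritical_roots_spec {d lam Δ α β : ℝ} (hd : 1 < d) (hlam0 : 0 < lam)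
    (hlam1 : lam < 2 * d - 1 - 2 * √(d * (d - 1)))
    (hΔ : Δ = lam ^ 2 - 2 * lam * (2 * d - 1) + 1)
    (hα : α = (1 - lam - √Δ) / 2) (hβ : β = (1 - lam + √Δ) / 2) :
    0 < α ∧ β < 1 ∧ α + β = 1 - lam ∧ α * β = lam * (d - 1) := by
  have hs := Real.sq_sqrt (show 0 ≤ d * (d - 1) by nlinarith)
  have hs0 := Real.sqrt_nonneg (d * (d - 1))
  have hlam_lt_one : lam < 1 := by nlinarith
  have hΔ0 : 0 ≤ Δ := by nlinarith
  have hr := Real.sq_sqrt hΔ0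
  have hr0 := Real.sqrt_nonneg Δ
  refine ⟨by nlinarith, by nlinarith, by rw [hα, hβ]; ring, ?_⟩
  rw [hα, hβ]
  linear_combination (-1 / 4 : ℝ) * hr - hΔ / 4

theorem mul_exp_neg_le_iff {a b x : ℝ} : a * exp (-x) ≤ b ↔ a ≤ b * exp x := by
  rw [exp_neg, ← div_eq_mul_inv, div_le_iff₀ (exp_pos x)]

theorem le_div_one_sub_of_forall_bound {ι : Type*} {S : Set ι} {h : ι → ℝ} {L q : ℝ}
    (hq : q < 1) (hS : S.Nonempty) (hbdd : BddAbove (h '' S))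
    (hstep : ∀ M, (∀ x ∈ S, h x ≤ M) → ∀ x ∈ S, h x ≤ L + q * M) :
    ∀ x ∈ S, h x ≤ L / (1 - q) := by
  set M := sSup (h '' S)
  have hM : ∀ x ∈ S, h x ≤ M := fun x hx => le_csSup hbdd (mem_image_of_mem h hx)
  have hML : M ≤ L + q * M := csSup_le (hS.image h) (forall_mem_image.2 (hstep M hM))
  intro x hx
  rw [le_div_iff₀ (by linarith)]
  nlinarith [hM x hx]

section TailBounds

variable {f : ℝ → ℝ} {γ M : ℝ}

theorem setIntegral_Ioi_mul_exp_neg_le (hγ : γ < 1) {v : ℝ}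
    (hf0 : ∀ s ∈ Ioi v, 0 ≤ f s) (hfM : ∀ s ∈ Ioi v, f s ≤ M * exp (γ * s)) :
    ∫ s in Ioi v, f s * exp (-s) ≤ M * exp (-(1 - γ) * v) / (1 - γ) := by
  have hγ' : -(1 - γ) < 0 := by linarith
  calc ∫ s in Ioi v, f s * exp (-s) ≤ ∫ s in Ioi v, M * exp (-(1 - γ) * s) := by
        refine setIntegral_mono_of_nonneg (fun s hs => mul_nonneg (hf0 s hs) (exp_pos _).le)
          (fun s hs => ?_) ((integrableOn_exp_mul_Ioi hγ' v).const_mul M)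
        calc f s * exp (-s) ≤ M * exp (γ * s) * exp (-s) :=
              mul_le_mul_of_nonneg_right (hfM s hs) (exp_pos _).le
          _ = M * exp (-(1 - γ) * s) := by rw [mul_assoc, ← exp_add]; ring_nf
    _ = M * exp (-(1 - γ) * v) / (1 - γ) := by
        rw [integral_const_mul, integral_exp_mul_Ioi hγ', neg_div_neg_eq, mul_div_assoc]

variable {lam : ℝ}

theorem integral_exp_mul_setIntegral_Ioi_le (hγ : γ < 1) (hc : 0 < lam + γ) (hM : 0 ≤ M)
    {t : ℝ} (ht : 0 ≤ t) (hf0 : ∀ s, 0 ≤ s → 0 ≤ f s)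
    (hfM : ∀ s, 0 ≤ s → f s ≤ M * exp (γ * s)) :
    ∫ v in (0 : ℝ)..t, exp ((lam + 1) * v) * ∫ s in Ioi v, f s * exp (-s) ≤
      M / ((1 - γ) * (lam + γ)) * exp ((lam + γ) * t) := by
  have hγ' : 0 < 1 - γ := sub_pos.2 hγ
  have hIoi : ∀ v ∈ Ioc 0 t, ∀ s ∈ Ioi v, 0 ≤ s := fun v hv s hs => hv.1.le.trans hs.le
  have hbound : ∀ v ∈ Ioc 0 t, exp ((lam + 1) * v) * ∫ s in Ioi v, f s * exp (-s) ≤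
      M / (1 - γ) * exp ((lam + γ) * v) := by
    intro v hv
    calc exp ((lam + 1) * v) * ∫ s in Ioi v, f s * exp (-s)
        ≤ exp ((lam + 1) * v) * (M * exp (-(1 - γ) * v) / (1 - γ)) :=
          mul_le_mul_of_nonneg_left (setIntegral_Ioi_mul_exp_neg_le hγ
            (fun s hs => hf0 s (hIoi v hv s hs)) (fun s hs => hfM s (hIoi v hv s hs)))
            (exp_pos _).le
      _ = M / (1 - γ) * exp ((lam + γ) * v) := by
          rw [mul_div_assoc', mul_left_comm, ← exp_add]; ring_nf
  have hint : IntegrableOn (fun v => M / (1 - γ) * exp ((lam + γ) * v)) (Iic t) :=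
    (integrableOn_exp_mul_Iic hc t).const_mul _
  rw [intervalIntegral.integral_of_le ht]
  calc ∫ v in Ioc 0 t, exp ((lam + 1) * v) * ∫ s in Ioi v, f s * exp (-s)
      ≤ ∫ v in Ioc 0 t, M / (1 - γ) * exp ((lam + γ) * v) :=
        setIntegral_mono_of_nonneg
          (fun v hv => mul_nonneg (exp_pos _).le (setIntegral_nonneg measurableSet_Ioi
            fun s hs => mul_nonneg (hf0 s (hIoi v hv s hs)) (exp_pos _).le))
          hbound (hint.mono_set Ioc_subset_Iic_self)
    _ ≤ ∫ v in Iic t, M / (1 - γ) * exp ((lam + γ) * v) :=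
        setIntegral_mono_set hint
          (Filter.Eventually.of_forall fun v => by positivity)
          Ioc_subset_Iic_self.eventuallyLE
    _ = M / ((1 - γ) * (lam + γ)) * exp ((lam + γ) * t) := by
        rw [integral_const_mul, integral_exp_mul_Iic hc]; field_simp

theorem le_mul_exp_of_le_add_integral {K L t : ℝ} (hγ : γ < 1) (hc : 0 < lam + γ)
    (hK : 0 ≤ K) (hM : 0 ≤ M) (ht : 0 ≤ t) (hf0 : ∀ s, 0 ≤ s → 0 ≤ f s)
    (hfM : ∀ s, 0 ≤ s → f s ≤ M * exp (γ * s))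
    (hineq : f t ≤ L * exp (γ * t) + K * exp (-(lam * t)) *
      ∫ v in (0 : ℝ)..t, exp ((lam + 1) * v) * ∫ s in Ioi v, f s * exp (-s)) :
    f t ≤ (L + K * M / ((1 - γ) * (lam + γ))) * exp (γ * t) := by
  calc f t ≤ L * exp (γ * t) + K * exp (-(lam * t)) *
        (M / ((1 - γ) * (lam + γ)) * exp ((lam + γ) * t)) := by
        grw [hineq, integral_exp_mul_setIntegral_Ioi_le hγ hc hM ht hf0 hfM]
    _ = (L + K * M / ((1 - γ) * (lam + γ))) * exp (γ * t) := by
        rw [show (lam + γ) * t = lam * t + γ * t by ring, exp_add, exp_neg]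
        field_simp

end TailBounds

theorem subcritical_integral_bound_general {d lam Δ α β : ℝ} (hd : 1 < d)
    (hlam0 : 0 < lam) (hlam1 : lam < 2 * d - 1 - 2 * Real.sqrt (d * (d - 1)))
    (hΔ : Δ = lam ^ 2 - 2 * lam * (2 * d - 1) + 1)
    (hα : α = (1 - lam - Real.sqrt Δ) / 2)
    (hβ : β = (1 - lam + Real.sqrt Δ) / 2)
    {u : ℝ} (hu1 : 1 < u) (hu2 : u < β / α)
    {L : ℝ}
    {f : ℝ → ℝ} (hfnonneg : ∀ t, 0 ≤ t → 0 ≤ f t)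
    (hfbdd : ∃ C : ℝ, ∀ t, 0 ≤ t → f t * Real.exp (-(u * α * t)) ≤ C)
    (hineq : ∀ t, 0 ≤ t →
      f t ≤ L * Real.exp (u * α * t) + lam * d * Real.exp (-(lam * t)) *
        ∫ v in (0:ℝ)..t, Real.exp ((lam + 1) * v) *
          ∫ s in Set.Ioi v, f s * Real.exp (-s)) :
    ∀ t, 0 ≤ t →
      f t ≤ L * (u * α + lam) * (1 - u * α) /
          ((1 - lam) * u * α - lam * (d - 1) - u ^ 2 * α ^ 2)
        * Real.exp (u * α * t) := by
  obtain ⟨hα0, hβ1, hsum, hprod⟩ := subcritical_roots_spec hd hlam0 hlam1 hΔ hα hβ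
  obtain ⟨C, hC⟩ := hfbdd
  have hγβ : u * α < β := (lt_div_iff₀ hα0).mp hu2
  have hγα : α < u * α := by nlinarith
  have hγ1 : u * α < 1 := hγβ.trans hβ1
  have hc : 0 < lam + u * α := by linarith
  have hfactor : (1 - u * α) * (lam + u * α) - lam * d = (u * α - α) * (β - u * α) := by
    linear_combination (-(u * α)) * hsum + hprod
  have hq : lam * d / ((1 - u * α) * (lam + u * α)) < 1 := by
    rw [div_lt_one (mul_pos (sub_pos.2 hγ1) hc)]
    linarith [mul_pos (sub_pos.2 hγα) (sub_pos.2 hγβ)]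
  have hbound := le_div_one_sub_of_forall_bound (S := Ici 0)
    (h := fun t => f t * exp (-(u * α * t))) (L := L) hq ⟨0, self_mem_Ici⟩
    ⟨C, forall_mem_image.2 hC⟩ fun M hM t ht => by
      have hM0 : 0 ≤ M :=
        (mul_nonneg (hfnonneg 0 le_rfl) (exp_pos _).le).trans (hM 0 self_mem_Ici)
      rw [mul_exp_neg_le_iff, div_mul_eq_mul_div]
      exact le_mul_exp_of_le_add_integral hγ1 hc (by positivity) hM0 ht hfnonneg
        (fun s hs => mul_exp_neg_le_iff.1 (hM s hs)) (hineq t ht)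
  intro t ht
  rw [← mul_exp_neg_le_iff]
  convert hbound t ht using 1
  rw [one_sub_div (mul_pos (sub_pos.2 hγ1) hc).ne', div_div_eq_mul_div]
  congr 1 <;> ring

/-- subcritical integral-inequality bound. For d > 1,
0 < λ < λ₁, Δ = λ² − 2λ(2d−1) + 1 > 0, α = (1−λ−√Δ)/2, β = (1−λ+√Δ)/2,
γ̄ = β/α, 1 < u < γ̄ and L > 0: if f : [0,∞) → [0,∞) is measurable with
sup_{t≥0} f(t)e^{−uαt} < ∞ and
f(t) ≤ L e^{uαt} + λd e^{−λt} ∫₀ᵗ e^{(λ+1)v} (∫_v^∞ f(s)e^{−s} ds) dv for all t ≥ 0,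
then f(t) ≤ [L(uα+λ)(1−uα)/((1−λ)uα − λ(d−1) − u²α²)] e^{uαt} for all t ≥ 0. -/
theorem subcritical_integral_bound {d lam Δ α β : ℝ} (hd : 1 < d)
    (hlam0 : 0 < lam) (hlam1 : lam < 2 * d - 1 - 2 * Real.sqrt (d * (d - 1)))
    (hΔ : Δ = lam ^ 2 - 2 * lam * (2 * d - 1) + 1)
    (hα : α = (1 - lam - Real.sqrt Δ) / 2)
    (hβ : β = (1 - lam + Real.sqrt Δ) / 2)
    {u : ℝ} (hu1 : 1 < u) (hu2 : u < β / α)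
    {L : ℝ} (hL : 0 < L)
    {f : ℝ → ℝ} (hfmeas : Measurable f) (hfnonneg : ∀ t, 0 ≤ t → 0 ≤ f t)
    (hfbdd : ∃ C : ℝ, ∀ t, 0 ≤ t → f t * Real.exp (-(u * α * t)) ≤ C)
    (hineq : ∀ t, 0 ≤ t →
      f t ≤ L * Real.exp (u * α * t) + lam * d * Real.exp (-(lam * t)) *
        ∫ v in (0:ℝ)..t, Real.exp ((lam + 1) * v) *
          ∫ s in Set.Ioi v, f s * Real.exp (-s)) :
    ∀ t, 0 ≤ t →
      f t ≤ L * (u * α + lam) * (1 - u * α) /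
          ((1 - lam) * u * α - lam * (d - 1) - u ^ 2 * α ^ 2)
        * Real.exp (u * α * t) :=
  subcritical_integral_bound_general hd hlam0 hlam1 hΔ hα hβ hu1 hu2 hfnonneg hfbdd hineq
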